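/- arXiv:0906.2385 — 3 statements merged into one kernel-verified Lean document; each statement's English description precedes it below -/
import Mathlib

section
/- Let A, B be elements of an associative (noncommutative) ring such that C := B*A - A*B commutes with both A and B. Then for every natural number n, (A + B)^n = Σ_{k=0}^{⌊n/2⌋} Σ_{m=0}^{n-2k} ((2k)!/(2^k k!)) * binomial(n, 2k) * binomial(n-2k, m) * C^k * A^{n-2k-m} * B^m. -/
/-!
Let `N j = ∑ m, (j choose m) A^(j-m) B^m` be the normally ordered binomial. From
`B A^i = A^i B + i C A^(i-1)` one gets `(A + B) N j = N (j+1) + j C N (j-1)`, the recurrence of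
the Hermite polynomials. Induction on `n` then gives `(A + B)^n = ∑ k, a(n,k) C^k N (n-2k)`, where
`a(n,k) = (2k-1)‼ (n choose 2k)` counts the matchings with `k` edges on `n` points, since these
numbers satisfy `a(n+1,k+1) = a(n,k+1) + (n-2k) a(n,k)`.
-/

open Finset

open scoped Nat

def pairingCount (n k : ℕ) : ℕ := n.choose (2 * k) * (2 * k - 1)‼

@[simp]
theorem pairingCount_zero_right (n : ℕ) : pairingCount n 0 = 1 := by
  simp [pairingCount]

theorem pairingCount_eq_zero_of_lt {n k : ℕ} (h : n < 2 * k) : pairingCount n k = 0 := by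
  rw [pairingCount, Nat.choose_eq_zero_of_lt h, zero_mul]

theorem pairingCount_succ_succ (n k : ℕ) :
    pairingCount (n + 1) (k + 1) = pairingCount n (k + 1) + (n - 2 * k) * pairingCount n k := by
  have hodd : (2 * k + 1)‼ = (2 * k + 1) * (2 * k - 1)‼ := Nat.doubleFactorial_add_one (2 * k)
  rw [pairingCount, pairingCount, pairingCount, show 2 * (k + 1) = 2 * k + 1 + 1 by ring,
    Nat.add_sub_cancel, Nat.choose_succ_succ', hodd, add_mul, ← mul_assoc (n.choose (2 * k + 1)),
    Nat.choose_succ_right_eq]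
  ring

theorem sum_pairingCount_succ_nsmul {M : Type*} [AddCommMonoid M] (X : ℕ → M) (n : ℕ) :
    ∑ k ∈ range (n + 2), pairingCount (n + 1) k • X k =
      ∑ k ∈ range (n + 1), pairingCount n k • X k +
        ∑ k ∈ range (n + 1), ((n - 2 * k) * pairingCount n k) • X (k + 1) := by
  have hshift := sum_range_succ' (fun k => pairingCount n k • X k) (n + 1)
  rw [sum_range_succ, pairingCount_eq_zero_of_lt (by omega), zero_smul, add_zero] at hshift
  rw [sum_range_succ', hshift]
  simp only [pairingCount_succ_succ, add_smul, sum_add_distrib, pairingCount_zero_right]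
  abel

theorem Nat.factorial_two_mul_eq (k : ℕ) : (2 * k)! = 2 ^ k * k ! * (2 * k - 1)‼ := by
  rcases k with _ | k
  · rfl
  rw [show 2 * (k + 1) = 2 * k + 1 + 1 by ring, Nat.factorial_eq_mul_doubleFactorial,
    Nat.add_sub_cancel, show 2 * k + 1 + 1 = 2 * (k + 1) by ring, Nat.doubleFactorial_two_mul]

theorem cast_pairingCount {K : Type*} [Field K] [CharZero K] (n k : ℕ) :
    (pairingCount n k : K) = (2 * k)! / (2 ^ k * k !) * n.choose (2 * k) := by
  have hk : (k ! : K) ≠ 0 := Nat.cast_ne_zero.2 k.factorial_ne_zero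
  rw [pairingCount, Nat.factorial_two_mul_eq]
  push_cast
  field_simp

def normalOrderedPow {R : Type*} [Semiring R] (A B : R) (j : ℕ) : R :=
  ∑ m ∈ range (j + 1), j.choose m • (A ^ (j - m) * B ^ m)

section Semiring

variable {R : Type*} [Semiring R] {A B C : R}

theorem mul_pow_eq_of_mul_eq_add (hBA : B * A = A * B + C) (hCA : Commute C A) (i : ℕ) :
    B * A ^ i = A ^ i * B + i • (C * A ^ (i - 1)) := by
  induction i with
  | zero => simp
  | succ i ih =>
    rcases i with _ | i
    · simpa using hBA
    · rw [pow_succ, ← mul_assoc, ih, add_mul, mul_assoc, hBA, mul_add, ← mul_assoc, ← pow_succ,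
        smul_mul_assoc, mul_assoc, ← pow_succ, add_tsub_cancel_right, add_tsub_cancel_right,
        ← (hCA.pow_right (i + 1)).eq, add_assoc, ← succ_nsmul']

theorem normalOrderedPow_succ (j : ℕ) :
    normalOrderedPow A B (j + 1) = A * normalOrderedPow A B j + normalOrderedPow A B j * B := by
  rw [normalOrderedPow, sum_choose_succ_nsmul (fun m r => A ^ r * B ^ m), normalOrderedPow,
    mul_sum, sum_mul]
  congr 1 <;> refine sum_congr rfl fun m hm => ?_
  · rw [mul_smul_comm, ← mul_assoc, ← pow_succ', Nat.sub_add_comm (mem_range_succ_iff.1 hm)]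
  · rw [smul_mul_assoc, mul_assoc, ← pow_succ]

theorem mul_normalOrderedPow (hBA : B * A = A * B + C) (hCA : Commute C A) (j : ℕ) :
    B * normalOrderedPow A B j =
      normalOrderedPow A B j * B + j • (C * normalOrderedPow A B (j - 1)) := by
  rcases j with _ | j
  · simp [normalOrderedPow]
  have hderiv : ∑ m ∈ range (j + 2), (j + 1).choose m • ((j + 1 - m) • (C * A ^ (j - m) * B ^ m))
      = (j + 1) • (C * normalOrderedPow A B j) := by
    rw [sum_range_succ, Nat.sub_self, zero_smul, smul_zero, add_zero, normalOrderedPow, mul_sum,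
      smul_sum]
    refine sum_congr rfl fun m _ => ?_
    rw [smul_smul, ← Nat.choose_mul_succ_eq, mul_comm, mul_smul, mul_assoc, mul_smul_comm]
  rw [add_tsub_cancel_right, ← hderiv, normalOrderedPow, mul_sum, sum_mul, ← sum_add_distrib]
  refine sum_congr rfl fun m _ => ?_
  rw [mul_smul_comm, ← mul_assoc, mul_pow_eq_of_mul_eq_add hBA hCA, add_mul, smul_add,
    show j + 1 - m - 1 = j - m by omega]
  simp only [smul_mul_assoc, mul_assoc, ← pow_succ, ← pow_succ']

theorem add_mul_normalOrderedPow (hBA : B * A = A * B + C) (hCA : Commute C A) (j : ℕ) :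
    (A + B) * normalOrderedPow A B j =
      normalOrderedPow A B (j + 1) + j • (C * normalOrderedPow A B (j - 1)) := by
  rw [add_mul, mul_normalOrderedPow hBA hCA, normalOrderedPow_succ, add_assoc]

theorem add_pow_eq_sum_pairingCount (hBA : B * A = A * B + C) (hCA : Commute C A)
    (hCB : Commute C B) (n : ℕ) :
    (A + B) ^ n =
      ∑ k ∈ range (n + 1), pairingCount n k • (C ^ k * normalOrderedPow A B (n - 2 * k)) := by
  induction n with
  | zero => simp [normalOrderedPow]
  | succ n ih =>
    have hterm : ∀ k, pairingCount n k • ((A + B) * (C ^ k * normalOrderedPow A B (n - 2 * k))) =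
        pairingCount n k • (C ^ k * normalOrderedPow A B (n + 1 - 2 * k)) +
          ((n - 2 * k) * pairingCount n k) •
            (C ^ (k + 1) * normalOrderedPow A B (n + 1 - 2 * (k + 1))) := by
      intro k
      rcases lt_or_ge n (2 * k) with h | h
      · simp [pairingCount_eq_zero_of_lt h]
      rw [← mul_assoc, ((hCA.add_right hCB).pow_left k).eq.symm, mul_assoc,
        add_mul_normalOrderedPow hBA hCA, show n - 2 * k + 1 = n + 1 - 2 * k by omega,
        show n + 1 - 2 * (k + 1) = n - 2 * k - 1 by omega, mul_add, smul_add, mul_smul_comm,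
        mul_comm _ (pairingCount n k), mul_smul, ← mul_assoc, ← pow_succ]
    rw [pow_succ', ih, mul_sum,
      sum_pairingCount_succ_nsmul (fun k => C ^ k * normalOrderedPow A B (n + 1 - 2 * k)),
      ← sum_add_distrib]
    exact sum_congr rfl fun k _ => by rw [mul_smul_comm, hterm]

end Semiring

/-- If `C = B*A - A*B` commutes with `A` and `B`, then
`(A+B)^n = ∑_{k=0}^{⌊n/2⌋} ∑_{m=0}^{n-2k} ((2k)!/(2^k k!)) C(n,2k) C(n-2k,m)
  C^k A^{n-2k-m} B^m`. -/
theorem stmt_1 {R : Type*} [Ring R] [Algebra ℚ R] (A B : R)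
    (hCA : (B * A - A * B) * A = A * (B * A - A * B))
    (hCB : (B * A - A * B) * B = B * (B * A - A * B)) (n : ℕ) :
    (A + B) ^ n =
      ∑ k ∈ Finset.range (n / 2 + 1), ∑ m ∈ Finset.range (n - 2 * k + 1),
        ((((2 * k).factorial : ℚ) / (2 ^ k * (k.factorial : ℚ))) *
          (n.choose (2 * k) : ℚ) * ((n - 2 * k).choose m : ℚ)) •
          ((B * A - A * B) ^ k * A ^ (n - 2 * k - m) * B ^ m) := by
  rw [add_pow_eq_sum_pairingCount (add_sub_cancel (A * B) (B * A)).symm hCA hCB n,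
    ← sum_subset (range_subset_range.2 (by omega : n / 2 + 1 ≤ n + 1))]
  · refine sum_congr rfl fun k _ => ?_
    rw [normalOrderedPow, mul_sum, smul_sum]
    refine sum_congr rfl fun m _ => ?_
    rw [mul_smul_comm, smul_smul, ← mul_assoc, ← Nat.cast_smul_eq_nsmul ℚ, Nat.cast_mul,
      cast_pairingCount]
  · intro k _ hk
    rw [pairingCount_eq_zero_of_lt (by rw [mem_range] at hk; omega), zero_smul]
end

section
/- Let A, B be n×n complex matrices such that the commutator C := B*A - A*B commutes with both A and B. Then exp(t(A+B)) = exp((t²/2) C) * exp(t A) * exp(t B) for all real t (the Baker–Campbell–Hausdorff formula for the Heisenberg algebra). -/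
/-!
Both sides solve the linear ODE `X' = (A + B) X` with `X 0 = 1`. On the right, moving `B` past
`exp (s A)` costs the exchange relation `exp (s A) B = (B - s C) exp (s A)` (itself proved by ODE
uniqueness, since `C` commutes with `A`), and the stray term `-s C` is cancelled by the factor `s C`
in the derivative of `exp ((s² / 2) C)`, which commutes with `A` and `B`.
-/

open NormedSpace

section BanachAlgebra

variable {𝔸 : Type*} [NormedRing 𝔸] [NormedAlgebra ℝ 𝔸]

theorem eq_of_hasDerivAt_mul_left (M : 𝔸) {f g : ℝ → 𝔸}
    (hf : ∀ s, HasDerivAt f (M * f s) s) (hg : ∀ s, HasDerivAt g (M * g s) s)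
    (h0 : f 0 = g 0) : f = g :=
  ODE_solution_unique_univ (v := fun _ x => M * x) (s := fun _ => Set.univ)
    (fun _ => (ContinuousLinearMap.mul ℝ 𝔸 M).lipschitz.lipschitzOnWith)
    (fun s => ⟨hf s, trivial⟩) (fun s => ⟨hg s, trivial⟩) h0

variable [CompleteSpace 𝔸]

theorem hasDerivAt_exp_half_sq_smul (C : 𝔸) (u : ℝ) :
    HasDerivAt (fun u : ℝ => exp ((u ^ 2 / 2) • C))
      (exp ((u ^ 2 / 2) • C) * u • C) u := by
  have hsq : HasDerivAt (fun v : ℝ => v ^ 2 / 2) u u := by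
    simpa using (hasDerivAt_pow 2 u).div_const 2
  simpa [Function.comp_def, smul_mul_assoc, mul_smul_comm] using
    (hasDerivAt_exp_smul_const (𝕂 := ℝ) C (u ^ 2 / 2)).scomp u hsq

theorem exp_smul_mul_eq_of_commute_commutator {A B : 𝔸} (hA : Commute A (B * A - A * B))
    (s : ℝ) : exp (s • A) * B = (B - s • (B * A - A * B)) * exp (s • A) := by
  generalize hC : B * A - A * B = C at hA ⊢
  refine congrFun (eq_of_hasDerivAt_mul_left A (f := fun u => exp (u • A) * B)
    (g := fun u => (B - u • C) * exp (u • A)) (fun u => ?_) (fun u => ?_) (by simp)) s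
  · simpa [mul_assoc] using (hasDerivAt_exp_smul_const' (𝕂 := ℝ) A u).mul_const B
  · have hlin : HasDerivAt (fun u : ℝ => B - u • C) (-C) u := by
      simpa using ((hasDerivAt_id u).smul_const C).const_sub B
    convert hlin.fun_mul (hasDerivAt_exp_smul_const' (𝕂 := ℝ) A u) using 1
    have hcomm : A * (B - u • C) = (B - u • C) * A - C := by
      rw [mul_sub, mul_smul_comm, hA.eq, sub_mul, smul_mul_assoc, ← hC]
      abel
    rw [← mul_assoc, hcomm, sub_mul, mul_assoc, neg_mul]
    abel

theorem exp_smul_add_of_commute_commutator {A B : 𝔸} (hA : Commute A (B * A - A * B))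
    (hB : Commute B (B * A - A * B)) (t : ℝ) :
    exp (t • (A + B)) =
      exp ((t ^ 2 / 2) • (B * A - A * B)) * exp (t • A) * exp (t • B) := by
  have hex := exp_smul_mul_eq_of_commute_commutator hA
  generalize B * A - A * B = C at hA hB hex ⊢
  refine congrFun (eq_of_hasDerivAt_mul_left (A + B)
    (g := fun u => exp ((u ^ 2 / 2) • C) * exp (u • A) * exp (u • B))
    (fun u => hasDerivAt_exp_smul_const' (𝕂 := ℝ) (A + B) u) (fun u => ?_) (by simp)) t
  convert ((hasDerivAt_exp_half_sq_smul C u).fun_mul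
    (hasDerivAt_exp_smul_const' (𝕂 := ℝ) A u)).fun_mul
    (hasDerivAt_exp_smul_const' (𝕂 := ℝ) B u) using 1
  set H := exp ((u ^ 2 / 2) • C)
  have hH : Commute (A + B) H := ((hA.add_left hB).smul_right _).exp_right
  have hsplit : A + B = u • C + A + (B - u • C) := by abel
  calc (A + B) * (H * exp (u • A) * exp (u • B))
      = H * ((A + B) * exp (u • A)) * exp (u • B) := by
        rw [← mul_assoc, ← mul_assoc, hH.eq, mul_assoc H]
    _ = _ := by
        rw [hsplit, add_mul (u • C + A), ← hex u]
        simp only [add_mul, mul_add, mul_assoc]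

end BanachAlgebra

/-- Baker–Campbell–Hausdorff for the Heisenberg algebra: if `C = B*A - A*B` commutes
with `A` and `B`, then `exp(t(A+B)) = exp((t²/2) C) * exp(t A) * exp(t B)`. -/
theorem stmt_2 {n : ℕ} (A B : Matrix (Fin n) (Fin n) ℂ)
    (hCA : (B * A - A * B) * A = A * (B * A - A * B))
    (hCB : (B * A - A * B) * B = B * (B * A - A * B)) (t : ℝ) :
    exp ((t : ℂ) • (A + B)) =
      exp (((t : ℂ) ^ 2 / 2) • (B * A - A * B)) * exp ((t : ℂ) • A) *
        exp ((t : ℂ) • B) := by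
  let : NormedRing (Matrix (Fin n) (Fin n) ℂ) := Matrix.linftyOpNormedRing
  let : NormedAlgebra ℝ (Matrix (Fin n) (Fin n) ℂ) := Matrix.linftyOpNormedAlgebra
  have hsq : (t : ℂ) ^ 2 / 2 = ((t ^ 2 / 2 : ℝ) : ℂ) := by push_cast; ring
  rw [hsq, Complex.coe_smul, Complex.coe_smul, Complex.coe_smul]
  exact exp_smul_add_of_commute_commutator hCA.symm hCB.symm t
end

section
/- For nonnegative integers α, β, γ, δ, the iterated integral I₁(α,β,γ,δ) = ∫₀¹ dτ₂ ∫₀^{τ₂} dτ₁ τ₁^α (1-τ₂)^β (τ₂-τ₁)^γ (1-τ₂+τ₁)^δ equals Γ(1+α)Γ(1+β)Γ(1+γ)Γ(2+α+β+δ) / (Γ(3+α+β+γ+δ) Γ(2+α+β)). -/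
/-!
Expanding `(1 - τ₂ + τ₁)^δ = ((1 - τ₂) + τ₁)^δ` binomially turns each term into a product of two
Beta integrals, `B(α+k+1, γ+1) · B(α+k+γ+2, β+δ-k+1)`. This product equals
`B(α+k+1, β+δ-k+1) · B(α+β+δ+2, γ+1)`, and the remaining binomial sum of Beta values collapses
to `B(α+1, β+1)`, being the integral of `x^α (1-x)^β (x + (1-x))^δ`.
-/

open Finset intervalIntegral
open scoped Nat

/-- `betaNat a b = B(a + 1, b + 1)`. -/
noncomputable def betaNat (a b : ℕ) : ℝ := a ! * b ! / (a + b + 1) !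

lemma betaNat_mul_betaNat_comm (a b c : ℕ) :
    betaNat a c * betaNat (a + c + 1) b = betaNat a b * betaNat (a + b + 1) c := by
  simp only [betaNat, show a + c + 1 + b + 1 = a + b + 1 + c + 1 by ring]
  field_simp

lemma Complex.betaIntegral_natCast_add_one (a b : ℕ) :
    Complex.betaIntegral (a + 1) (b + 1) = betaNat a b := by
  have hΓ := Complex.Gamma_mul_Gamma_eq_betaIntegral (s := (a : ℂ) + 1) (t := (b : ℂ) + 1)
    (by simp; positivity) (by simp; positivity)
  rw [show (a : ℂ) + 1 + (b + 1) = ((a + b + 1 : ℕ) : ℂ) + 1 by push_cast; ring,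
    Complex.Gamma_nat_eq_factorial, Complex.Gamma_nat_eq_factorial,
    Complex.Gamma_nat_eq_factorial] at hΓ
  rw [betaNat, Complex.ofReal_div, eq_div_iff (by exact_mod_cast (a + b + 1).factorial_ne_zero)]
  push_cast
  rw [hΓ, mul_comm]

lemma integral_pow_mul_sub_pow (a b : ℕ) {t : ℝ} (ht : 0 ≤ t) :
    ∫ x in (0 : ℝ)..t, x ^ a * (t - x) ^ b = t ^ (a + b + 1) * betaNat a b := by
  rcases ht.eq_or_lt with rfl | ht
  · simp
  have h := Complex.betaIntegral_scaled ((a : ℂ) + 1) ((b : ℂ) + 1) ht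
  rw [show (a : ℂ) + 1 + (b + 1) - 1 = ((a + b + 1 : ℕ) : ℂ) by push_cast; ring,
    Complex.betaIntegral_natCast_add_one] at h
  simp only [add_sub_cancel_right, Complex.cpow_natCast] at h
  have hcast : ((∫ x in (0 : ℝ)..t, x ^ a * (t - x) ^ b : ℝ) : ℂ)
      = ∫ x in (0 : ℝ)..t, (x : ℂ) ^ a * ((t : ℂ) - x) ^ b := by
    rw [← integral_ofReal]; push_cast; rfl
  exact_mod_cast hcast.trans h

lemma integral_pow_mul_one_sub_pow (a b : ℕ) :
    ∫ x in (0 : ℝ)..1, x ^ a * (1 - x) ^ b = betaNat a b := by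
  simpa using integral_pow_mul_sub_pow a b zero_le_one

lemma sum_choose_mul_betaNat (a b d : ℕ) :
    ∑ k ∈ range (d + 1), (d.choose k : ℝ) * betaNat (a + k) (b + (d - k)) = betaNat a b := by
  calc ∑ k ∈ range (d + 1), (d.choose k : ℝ) * betaNat (a + k) (b + (d - k))
      = ∫ x in (0 : ℝ)..1, ∑ k ∈ range (d + 1),
          (d.choose k : ℝ) * (x ^ (a + k) * (1 - x) ^ (b + (d - k))) := by
        rw [integral_finsetSum fun k _ => Continuous.intervalIntegrable (by fun_prop) _ _]
        simp only [integral_const_mul, integral_pow_mul_one_sub_pow]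
    _ = ∫ x in (0 : ℝ)..1, x ^ a * (1 - x) ^ b * (x + (1 - x)) ^ d := by
        congr 1; ext x
        rw [add_pow, mul_sum]
        refine sum_congr rfl fun k _ => ?_
        ring
    _ = betaNat a b := by simp [integral_pow_mul_one_sub_pow]

lemma integral_pow_mul_sub_pow_mul_add_pow (a b c d : ℕ) {t : ℝ} (ht : 0 ≤ t) :
    ∫ τ in (0 : ℝ)..t, τ ^ a * (1 - t) ^ b * (t - τ) ^ c * (1 - t + τ) ^ d
      = ∑ k ∈ range (d + 1), (d.choose k : ℝ) * betaNat (a + k) c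
          * (t ^ (a + k + c + 1) * (1 - t) ^ (b + (d - k))) := by
  have expand : ∀ τ : ℝ, τ ^ a * (1 - t) ^ b * (t - τ) ^ c * (1 - t + τ) ^ d
      = ∑ k ∈ range (d + 1), (d.choose k : ℝ) * (1 - t) ^ (b + (d - k))
          * (τ ^ (a + k) * (t - τ) ^ c) := by
    intro τ
    rw [add_comm (1 - t), add_pow, mul_sum]
    refine sum_congr rfl fun k _ => ?_
    ring
  simp only [expand]
  rw [integral_finsetSum fun k _ => Continuous.intervalIntegrable (by fun_prop) _ _]
  refine sum_congr rfl fun k _ => ?_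
  rw [integral_const_mul, integral_pow_mul_sub_pow _ _ ht]
  ring

lemma iteratedIntegral_eq_sum (a b c d : ℕ) :
    ∫ t in (0 : ℝ)..1, ∫ τ in (0 : ℝ)..t,
        τ ^ a * (1 - t) ^ b * (t - τ) ^ c * (1 - t + τ) ^ d
      = ∑ k ∈ range (d + 1), (d.choose k : ℝ) * betaNat (a + k) c
          * betaNat (a + k + c + 1) (b + (d - k)) := by
  rw [integral_congr fun t ht => integral_pow_mul_sub_pow_mul_add_pow a b c d
    (by rw [Set.uIcc_of_le zero_le_one] at ht; exact ht.1),
    integral_finsetSum fun k _ => Continuous.intervalIntegrable (by fun_prop) _ _]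
  simp only [integral_const_mul, integral_pow_mul_one_sub_pow]

/-- `I₁(α,β,γ,δ) = ∫₀¹ dτ₂ ∫₀^{τ₂} dτ₁ τ₁^α (1-τ₂)^β (τ₂-τ₁)^γ (1-τ₂+τ₁)^δ
  = Γ(1+α)Γ(1+β)Γ(1+γ)Γ(2+α+β+δ) / (Γ(3+α+β+γ+δ)Γ(2+α+β))`. -/
theorem stmt_4 (α β γ δ : ℕ) :
    (∫ τ₂ in (0:ℝ)..1, ∫ τ₁ in (0:ℝ)..τ₂,
        τ₁ ^ α * (1 - τ₂) ^ β * (τ₂ - τ₁) ^ γ * (1 - τ₂ + τ₁) ^ δ) =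
      Real.Gamma (1 + α) * Real.Gamma (1 + β) * Real.Gamma (1 + γ) *
          Real.Gamma (2 + α + β + δ) /
        (Real.Gamma (3 + α + β + γ + δ) * Real.Gamma (2 + α + β)) := by
  have hsum : ∀ k ∈ range (δ + 1),
      (δ.choose k : ℝ) * betaNat (α + k) γ * betaNat (α + k + γ + 1) (β + (δ - k))
        = (δ.choose k : ℝ) * betaNat (α + k) (β + (δ - k)) * betaNat (α + β + δ + 1) γ := by
    intro k hk
    rw [mul_assoc, betaNat_mul_betaNat_comm, mul_assoc,
      show α + k + (β + (δ - k)) + 1 = α + β + δ + 1 by grind]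
  rw [iteratedIntegral_eq_sum, sum_congr rfl hsum, ← sum_mul, sum_choose_mul_betaNat]
  have hΓ : ∀ (x : ℝ) (n : ℕ), x = n + 1 → Real.Gamma x = n ! := by
    rintro x n rfl; exact Real.Gamma_nat_eq_factorial n
  rw [hΓ _ α (by ring), hΓ _ β (by ring), hΓ _ γ (by ring),
    hΓ _ (α + β + δ + 1) (by push_cast; ring), hΓ _ (α + β + δ + 1 + γ + 1) (by push_cast; ring),
    hΓ _ (α + β + 1) (by push_cast; ring)]
  simp only [betaNat]
  field_simp
end
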